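/- arXiv:0907.0347 — 3 statements merged into one kernel-verified Lean document; each statement's English description precedes it below -/
import Mathlib

section
/- Let a₀ be an n×n real matrix and define ã(i,j) := a₀(i,j) − (1/n)∑_k a₀(k,j) − (1/n)∑_k a₀(i,k) + (1/n²)∑_{k,l} a₀(k,l). Then for a uniformly random permutation π of {1,...,n} (n≥2), Var(∑_i a₀(i,π(i))) = (1/(n−1))·∑_{i,j} ã(i,j)². -/
/-!
If a finite group acts transitively on `X`, then `∑ g, f (g • x)` does not depend on `x`, so it
equals `|G| / |X| · ∑ y, f y`. Applied to `Perm α` acting on `α` and on ordered pairs of distinct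
points (`Fin 2 ↪ α`), this gives the first two moments of `b (i, σ i)` for a random permutation `σ`.

Since `∑ i, a₀ i (σ i) = ∑ i, ã i (σ i) + (1/n) ∑ a₀`, the variance is the second moment of
`∑ i, ã i (σ i)`, whose mean vanishes because `ã` has zero row sums. In the second moment the
diagonal terms contribute `(n-1)! ∑ ã²`, and the off-diagonal ones `-(n-2)! ∑ₖ ã i k * ã j k`,
which by the zero column sums add up to `(n-2)! ∑ ã²`; in total `n!/(n-1) · ∑ ã²`.
-/

open Finset Nat

namespace MulAction

variable {G X M : Type*} [Group G] [Fintype G] [MulAction G X] [IsPretransitive G X]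
  [AddCommMonoid M]

theorem sum_comp_smul_eq_sum_comp_smul (f : X → M) (x y : X) :
    ∑ g : G, f (g • x) = ∑ g : G, f (g • y) := by
  obtain ⟨h, rfl⟩ := exists_smul_eq G x y
  exact (Fintype.sum_equiv (Equiv.mulRight h) _ _ fun g => by simp [mul_smul]).symm

theorem card_nsmul_sum_comp_smul [Fintype X] (f : X → M) (x : X) :
    Fintype.card X • ∑ g : G, f (g • x) = Fintype.card G • ∑ y, f y := by
  calc Fintype.card X • ∑ g : G, f (g • x) = ∑ y : X, ∑ g : G, f (g • y) := by
        rw [← Finset.card_univ, ← Finset.sum_const]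
        exact Finset.sum_congr rfl fun y _ => sum_comp_smul_eq_sum_comp_smul f x y
    _ = ∑ g : G, ∑ y, f (g • y) := Finset.sum_comm
    _ = Fintype.card G • ∑ y, f y := by
        rw [← Finset.card_univ, ← Finset.sum_const]
        exact Finset.sum_congr rfl fun g _ => (MulAction.bijective g).sum_comp f

end MulAction

namespace Function.Embedding

variable {α : Type*} [Fintype α]

theorem card_fin_two_embedding :
    Fintype.card (Fin 2 ↪ α) = Fintype.card α * (Fintype.card α - 1) := by
  simp [Fintype.card_embedding_eq, Nat.descFactorial, mul_comm]

theorem sum_fin_two_embedding [DecidableEq α] {M : Type*} [AddCommGroup M] (f : α → α → M) :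
    ∑ e : Fin 2 ↪ α, f (e 0) (e 1) = ∑ k, (∑ l, f k l - f k k) := by
  rw [← Fintype.sum_equiv twoEmbeddingEquiv.symm (fun p => f p.1.1 p.1.2) _ fun _ => rfl,
    ← Finset.sum_subtype (univ.filter fun p : α × α => p.1 ≠ p.2) (by simp)
      (fun p : α × α => f p.1 p.2), Finset.sum_filter, Fintype.sum_prod_type]
  refine Finset.sum_congr rfl fun k _ => ?_
  rw [← Finset.sum_filter, Finset.filter_ne, Finset.sum_erase_eq_sub (mem_univ k)]

end Function.Embedding

namespace Equiv.Perm

variable {α : Type*} [Fintype α] [DecidableEq α]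

theorem card_nsmul_sum_comp_apply {M : Type*} [AddCommMonoid M] (f : α → M) (i : α) :
    Fintype.card α • ∑ σ : Perm α, f (σ i) = (Fintype.card α)! • ∑ k, f k := by
  simpa [Fintype.card_perm] using MulAction.card_nsmul_sum_comp_smul (G := Perm α) f i

theorem card_mul_pred_nsmul_sum_comp_apply_apply {M : Type*} [AddCommGroup M]
    (f : α → α → M) {i j : α} (hij : i ≠ j) :
    (Fintype.card α * (Fintype.card α - 1)) • ∑ σ : Perm α, f (σ i) (σ j)
      = (Fintype.card α)! • ∑ k, (∑ l, f k l - f k k) := by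
  have := isMultiplyPretransitive α 2
  have h := MulAction.card_nsmul_sum_comp_smul (G := Perm α)
    (fun e : Fin 2 ↪ α => f (e 0) (e 1)) (Function.Embedding.embFinTwo hij)
  rwa [Function.Embedding.card_fin_two_embedding, Function.Embedding.sum_fin_two_embedding,
    Fintype.card_perm] at h

theorem card_mul_sum_apply_mul_apply (u v : α → ℝ) (i : α) :
    Fintype.card α * ∑ σ : Perm α, u (σ i) * v (σ i) = (Fintype.card α)! * ∑ k, u k * v k := by
  simpa only [nsmul_eq_mul] using card_nsmul_sum_comp_apply (fun k => u k * v k) i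

theorem card_mul_pred_mul_sum_apply_mul_apply_of_sum_eq_zero (u v : α → ℝ) (hv : ∑ k, v k = 0)
    {i j : α} (hij : i ≠ j) :
    Fintype.card α * (Fintype.card α - 1) * ∑ σ : Perm α, u (σ i) * v (σ j)
      = -((Fintype.card α)! * ∑ k, u k * v k) := by
  have hcard : 1 ≤ Fintype.card α := Fintype.card_pos_iff.mpr ⟨i⟩
  have := card_mul_pred_nsmul_sum_comp_apply_apply (fun k l => u k * v l) hij
  simp only [← Finset.mul_sum, hv, mul_zero, zero_sub, Finset.sum_neg_distrib, nsmul_eq_mul] at this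
  push_cast [Nat.cast_sub hcard] at this
  linear_combination this

theorem sum_sum_apply_eq_zero (b : α → α → ℝ) (hrow : ∀ i, ∑ j, b i j = 0) :
    ∑ σ : Perm α, ∑ i, b i (σ i) = 0 := by
  rw [Finset.sum_comm]
  refine Finset.sum_eq_zero fun i _ => ?_
  have h := card_nsmul_sum_comp_apply (b i) i
  rw [hrow, smul_zero] at h
  exact (smul_eq_zero.mp h).resolve_left (Fintype.card_pos_iff.mpr ⟨i⟩).ne'

theorem pred_mul_sum_sq_sum_apply_of_sum_eq_zero (b : α → α → ℝ)
    (hrow : ∀ i, ∑ j, b i j = 0) (hcol : ∀ j, ∑ i, b i j = 0) :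
    (Fintype.card α - 1) * ∑ σ : Perm α, (∑ i, b i (σ i)) ^ 2
      = (Fintype.card α)! * ∑ i, ∑ j, b i j ^ 2 := by
  set n : ℝ := (Fintype.card α : ℝ)
  have hrow_moment : ∀ i, n * (n - 1) * ∑ j, ∑ σ : Perm α, b i (σ i) * b j (σ j)
      = n * (Fintype.card α)! * ∑ k, b i k ^ 2 := by
    intro i
    have hdiag := card_mul_sum_apply_mul_apply (b i) (b i) i
    have hoff : ∑ j ∈ univ.erase i, ∑ k, b i k * b j k = -∑ k, b i k * b i k := by
      rw [Finset.sum_comm]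
      simp_rw [← Finset.mul_sum, Finset.sum_erase_eq_sub (mem_univ i), hcol]
      simp
    rw [← Finset.add_sum_erase _ _ (mem_univ i), mul_add, Finset.mul_sum (univ.erase i),
      Finset.sum_congr rfl fun j hj => card_mul_pred_mul_sum_apply_mul_apply_of_sum_eq_zero
        (b i) (b j) (hrow j) (Finset.ne_of_mem_erase hj).symm,
      Finset.sum_neg_distrib, ← Finset.mul_sum, hoff]
    simp_rw [sq]
    linear_combination (n - 1) * hdiag
  rcases isEmpty_or_nonempty α with hα | hα
  · simp
  have hn : n ≠ 0 := Nat.cast_ne_zero.mpr Fintype.card_ne_zero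
  apply mul_left_cancel₀ hn
  calc n * ((n - 1) * ∑ σ : Perm α, (∑ i, b i (σ i)) ^ 2)
      = ∑ i, n * (n - 1) * ∑ j, ∑ σ : Perm α, b i (σ i) * b j (σ j) := by
        rw [← mul_assoc, ← Finset.mul_sum]
        congr 1
        simp_rw [sq, Finset.sum_mul_sum]
        rw [Finset.sum_comm]
        exact Finset.sum_congr rfl fun i _ => Finset.sum_comm
    _ = n * ((Fintype.card α)! * ∑ i, ∑ j, b i j ^ 2) := by
        simp_rw [hrow_moment, ← Finset.mul_sum]
        ring

end Equiv.Perm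

section DoublyCentred

variable {α : Type*} [Fintype α]

noncomputable def doublyCentred (a : α → α → ℝ) (i j : α) : ℝ :=
  a i j - (1 / (Fintype.card α : ℝ)) * ∑ k, a k j - (1 / (Fintype.card α : ℝ)) * ∑ k, a i k
    + (1 / (Fintype.card α : ℝ) ^ 2) * ∑ k, ∑ l, a k l

theorem sum_doublyCentred_right (a : α → α → ℝ) (i : α) : ∑ j, doublyCentred a i j = 0 := by
  have hn : (Fintype.card α : ℝ) ≠ 0 := Nat.cast_ne_zero.mpr (Fintype.card_pos_iff.mpr ⟨i⟩).ne'
  simp only [doublyCentred, Finset.sum_add_distrib, Finset.sum_sub_distrib, ← Finset.mul_sum,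
    Finset.sum_const, Finset.card_univ, nsmul_eq_mul]
  rw [Finset.sum_comm (f := fun j k => a k j)]
  field_simp
  ring

theorem sum_doublyCentred_left (a : α → α → ℝ) (j : α) : ∑ i, doublyCentred a i j = 0 := by
  have hn : (Fintype.card α : ℝ) ≠ 0 := Nat.cast_ne_zero.mpr (Fintype.card_pos_iff.mpr ⟨j⟩).ne'
  simp only [doublyCentred, Finset.sum_add_distrib, Finset.sum_sub_distrib, ← Finset.mul_sum,
    Finset.sum_const, Finset.card_univ, nsmul_eq_mul]
  field_simp
  ring

theorem sum_apply_perm_eq_sum_doublyCentred_add (a : α → α → ℝ) (σ : Equiv.Perm α) :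
    ∑ i, a i (σ i)
      = ∑ i, doublyCentred a i (σ i) + (1 / (Fintype.card α : ℝ)) * ∑ k, ∑ l, a k l := by
  rcases isEmpty_or_nonempty α with hα | hα
  · simp
  have hn : (Fintype.card α : ℝ) ≠ 0 := Nat.cast_ne_zero.mpr Fintype.card_ne_zero
  have hcols : ∑ i, ∑ k, a k (σ i) = ∑ k, ∑ l, a k l := by
    rw [Equiv.sum_comp σ (fun j => ∑ k, a k j), Finset.sum_comm]
  simp only [doublyCentred, Finset.sum_add_distrib, Finset.sum_sub_distrib, ← Finset.mul_sum,
    Finset.sum_const, Finset.card_univ, nsmul_eq_mul, hcols]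
  field_simp
  ring

end DoublyCentred

/-- Hoeffding variance formula: for a uniformly random permutation π of
{1,...,n} (n ≥ 2) and the doubly-centred matrix ã,
Var(∑_i a₀(i,π(i))) = (1/(n−1))·∑_{i,j} ã(i,j)². -/
theorem stmt2 (n : ℕ) (hn : 2 ≤ n) (a₀ ta : Fin n → Fin n → ℝ)
    (hta : ∀ i j : Fin n, ta i j =
      a₀ i j - (1 / (n : ℝ)) * ∑ k : Fin n, a₀ k j
        - (1 / (n : ℝ)) * ∑ k : Fin n, a₀ i k
        + (1 / (n : ℝ)^2) * ∑ k : Fin n, ∑ l : Fin n, a₀ k l) :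
    (∑ π : Equiv.Perm (Fin n), (∑ i : Fin n, a₀ i (π i))^2) / (Nat.factorial n : ℝ)
      - ((∑ π : Equiv.Perm (Fin n), ∑ i : Fin n, a₀ i (π i)) / (Nat.factorial n : ℝ))^2
      = (1 / ((n : ℝ) - 1)) * ∑ i : Fin n, ∑ j : Fin n, (ta i j)^2 := by
  obtain rfl : ta = doublyCentred a₀ := by
    ext i j
    rw [hta, doublyCentred, Fintype.card_fin]
  have hmean := Equiv.Perm.sum_sum_apply_eq_zero _ (sum_doublyCentred_right a₀)
  have hsecond := Equiv.Perm.pred_mul_sum_sq_sum_apply_of_sum_eq_zero _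
    (sum_doublyCentred_right a₀) (sum_doublyCentred_left a₀)
  have hn1 : (n : ℝ) - 1 ≠ 0 := by
    have : (2 : ℝ) ≤ n := by exact_mod_cast hn
    linarith
  rw [Fintype.card_fin] at hsecond
  simp_rw [sum_apply_perm_eq_sum_doublyCentred_add a₀, add_sq, Finset.sum_add_distrib,
    ← Finset.sum_mul, ← Finset.mul_sum, hmean, Finset.sum_const, Finset.card_univ,
    Fintype.card_perm, Fintype.card_fin, nsmul_eq_mul]
  field_simp
  linear_combination (n : ℝ) ^ 2 * (n ! : ℝ) * hsecond
end

section
/- For a uniformly random permutation π of {1,...,n} with n ≥ 2 and I_i := 1{π(i) ≥ i}, one has for i < j: E[I_i I_j] = (n − i)(n − j + 1)/((n − 1)n). -/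
/-!
For `i ≠ j` the pair `(π i, π j)` of a uniformly random permutation is uniformly distributed on
ordered pairs of distinct elements: left multiplication by a permutation sending `(a, b)` to
`(a', b')` matches the permutations with `(π i, π j) = (a, b)` with those with
`(π i, π j) = (a', b')`, so every such fibre has `(n - 2)!` elements. The sum of `I_i I_j` is
therefore `(n - 2)!` times the number of pairs `a ≠ b` with `i ≤ a`, `j ≤ b`, which for `i < j` is
`(n - i)(n - j) - (n - j)`.
-/

open Finset Nat

theorem Finset.sum_offDiag_eq_sub {α M : Type*} [DecidableEq α] [AddCommGroup M]
    (s : Finset α) (f : α → α → M) :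
    ∑ p ∈ s.offDiag, f p.1 p.2 = ∑ a ∈ s, ∑ b ∈ s, f a b - ∑ a ∈ s, f a a := by
  rw [← sum_product', ← diag_union_offDiag, sum_union (disjoint_diag_offDiag s),
    diag, sum_map]
  simp

namespace Equiv.Perm

variable {α : Type*} [DecidableEq α]

theorem exists_apply_eq_and_apply_eq {a b a' b' : α} (hab : a ≠ b) (hab' : a' ≠ b') :
    ∃ σ : Perm α, σ a = a' ∧ σ b = b' := by
  have hb : swap a a' b ≠ a' := by
    simpa using (swap a a').injective.ne hab.symm
  refine ⟨swap (swap a a' b) b' * swap a a', ?_, ?_⟩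
  · simp [swap_apply_of_ne_of_ne hb.symm hab']
  · simp

variable [Fintype α]

theorem card_filter_apply_eq_and_apply_eq_congr {i j a b a' b' : α} (hab : a ≠ b)
    (hab' : a' ≠ b') :
    #{π : Perm α | π i = a ∧ π j = b} = #{π : Perm α | π i = a' ∧ π j = b'} := by
  obtain ⟨σ, rfl, rfl⟩ := exists_apply_eq_and_apply_eq hab hab'
  exact card_equiv (Equiv.mulLeft σ) fun π => by simp

theorem card_filter_apply_eq_and_apply_eq {i j a b : α} (hij : i ≠ j) (hab : a ≠ b) :
    #{π : Perm α | π i = a ∧ π j = b} = (Fintype.card α - 2)! := by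
  set c := #{π : Perm α | π i = a ∧ π j = b}
  have hfibre : ∀ p ∈ (univ : Finset α).offDiag,
      #{π : Perm α | (π i, π j) = p} = c := fun p hp => by
    simp only [Prod.ext_iff]
    exact card_filter_apply_eq_and_apply_eq_congr (mem_offDiag.1 hp).2.2 hab
  have htotal : (Fintype.card α)! = (Fintype.card α * Fintype.card α - Fintype.card α) * c := by
    rw [← Fintype.card_perm, ← Finset.card_univ,
      card_eq_sum_card_fiberwise (f := fun π : Perm α => (π i, π j)) (t := univ.offDiag)
      fun π _ => by simpa using π.injective.ne hij, sum_congr rfl hfibre]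
    simp
  obtain ⟨m, hm⟩ : ∃ m, Fintype.card α = m + 2 :=
    Nat.exists_eq_add_of_le' (Fintype.one_lt_card_iff.2 ⟨i, j, hij⟩)
  rw [hm, factorial_succ, factorial_succ, ← mul_assoc] at htotal
  rw [hm, Nat.add_sub_cancel]
  refine (Nat.eq_of_mul_eq_mul_left (by positivity : 0 < (m + 2) * (m + 1)) ?_).symm
  rw [htotal, ← Nat.mul_sub_one]
  rfl

theorem sum_apply_apply {M : Type*} [AddCommMonoid M] {i j : α} (hij : i ≠ j)
    (f : α → α → M) :
    ∑ π : Perm α, f (π i) (π j) = (Fintype.card α - 2)! • ∑ p ∈ univ.offDiag, f p.1 p.2 := by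
  rw [← sum_fiberwise_of_maps_to (g := fun π : Perm α => (π i, π j)) (t := univ.offDiag)
    fun π _ => by simpa using π.injective.ne hij, smul_sum]
  refine sum_congr rfl fun p hp => ?_
  rw [sum_congr rfl (g := fun _ => f p.1 p.2) fun π hπ => by rw [← (mem_filter.1 hπ).2], sum_const]
  simp only [Prod.ext_iff]
  rw [card_filter_apply_eq_and_apply_eq hij (mem_offDiag.1 hp).2.2]

theorem sum_apply_apply_eq_sub {M : Type*} [AddCommGroup M] {i j : α} (hij : i ≠ j)
    (f : α → α → M) :
    ∑ π : Perm α, f (π i) (π j) = (Fintype.card α - 2)! • (∑ a, ∑ b, f a b - ∑ a, f a a) := by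
  rw [sum_apply_apply hij, sum_offDiag_eq_sub]

end Equiv.Perm

theorem Fin.sum_ite_le {R : Type*} [AddCommGroupWithOne R] {n : ℕ} (k : Fin n) :
    ∑ a : Fin n, (if k ≤ a then (1 : R) else 0) = n - k := by
  rw [sum_boole, filter_le_eq_Ici, Fin.card_Ici, Nat.cast_sub k.is_lt.le]

/-- Indices are 0-based (`Fin n`): the 1-based `(n − i)(n − j + 1)` becomes `(n − i − 1)(n − j)`. -/
theorem stmt10 (n : ℕ) (hn : 2 ≤ n) (i j : Fin n) (hij : i < j) :
    (∑ π : Equiv.Perm (Fin n),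
        (if i ≤ π i then (1 : ℝ) else 0) * (if j ≤ π j then (1 : ℝ) else 0))
        / (Nat.factorial n : ℝ)
      = ((n : ℝ) - (i : ℕ) - 1) * ((n : ℝ) - (j : ℕ)) / (((n : ℝ) - 1) * n) := by
  have hdiag : ∀ a : Fin n,
      (if i ≤ a then (1 : ℝ) else 0) * (if j ≤ a then 1 else 0) = if j ≤ a then 1 else 0 := by
    intro a
    by_cases h : j ≤ a <;> simp [h, hij.le.trans]
  rw [Equiv.Perm.sum_apply_apply_eq_sub hij.ne
      (fun a b => (if i ≤ a then (1 : ℝ) else 0) * (if j ≤ b then 1 else 0)),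
    ← sum_mul_sum, sum_congr rfl fun a _ => hdiag a,
    Fin.sum_ite_le, Fin.sum_ite_le, Fintype.card_fin, nsmul_eq_mul]
  obtain ⟨m, rfl⟩ := Nat.exists_eq_add_of_le' hn
  rw [Nat.add_sub_cancel, factorial_succ, factorial_succ]
  push_cast
  rw [div_eq_div_iff (by positivity) (by ring_nf; positivity)]
  ring
end

section
/- For 0 ≤ t ≤ u ≤ 1, 6·∫₀ᵗ∫₀ᵘ [(1 − max(x,y)) − (1−x)(1−y)] dy dx = 3t²u − t³ − (3/2)t²u². -/
/-! Since `(1 - max x y) - (1 - x) * (1 - y) = min x y - x * y`, the inner integral is elementary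
once `[0, u]` is split at `x`; it is then a polynomial in `x`, integrated directly. -/

open intervalIntegral

lemma one_sub_max_sub_one_sub_mul (x y : ℝ) :
    (1 - max x y) - (1 - x) * (1 - y) = min x y - x * y := by
  rcases le_total x y with h | h
  · rw [max_eq_right h, min_eq_left h]; ring
  · rw [max_eq_left h, min_eq_right h]; ring

lemma integral_min_left {a b x : ℝ} (hax : a ≤ x) (hxb : x ≤ b) :
    ∫ y in a..b, min x y = (x ^ 2 - a ^ 2) / 2 + x * (b - x) := by
  have hmin : Continuous fun y : ℝ => min x y := continuous_const.min continuous_id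
  rw [← integral_add_adjacent_intervals (hmin.intervalIntegrable a x) (hmin.intervalIntegrable x b)]
  have below : ∫ y in a..x, min x y = ∫ y in a..x, y := by
    refine integral_congr fun y hy => ?_
    rw [Set.uIcc_of_le hax] at hy
    exact min_eq_right hy.2
  have above : ∫ y in x..b, min x y = ∫ _ in x..b, x := by
    refine integral_congr fun y hy => ?_
    rw [Set.uIcc_of_le hxb] at hy
    exact min_eq_left hy.1
  rw [below, above, integral_id, integral_const, smul_eq_mul, mul_comm]

lemma integral_min_sub_mul {x u : ℝ} (hx : 0 ≤ x) (hxu : x ≤ u) :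
    ∫ y in (0:ℝ)..u, (min x y - x * y) = x * u - x ^ 2 / 2 - x * u ^ 2 / 2 := by
  rw [integral_sub (Continuous.intervalIntegrable (by fun_prop) _ _)
      (Continuous.intervalIntegrable (by fun_prop) _ _), integral_min_left hx hxu,
    integral_const_mul, integral_id]
  ring

theorem stmt14_general (t u : ℝ) (ht : 0 ≤ t) (htu : t ≤ u) :
    6 * ∫ x in (0:ℝ)..t, ∫ y in (0:ℝ)..u,
        ((1 - max x y) - (1 - x) * (1 - y))
      = 3 * t^2 * u - t^3 - (3 / 2) * t^2 * u^2 := by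
  have inner : ∫ x in (0:ℝ)..t, ∫ y in (0:ℝ)..u, ((1 - max x y) - (1 - x) * (1 - y))
      = ∫ x in (0:ℝ)..t, (x * u - x ^ 2 / 2 - x * u ^ 2 / 2) := by
    refine integral_congr fun x hx => ?_
    rw [Set.uIcc_of_le ht] at hx
    simp only [one_sub_max_sub_one_sub_mul]
    exact integral_min_sub_mul hx.1 (hx.2.trans htu)
  have antiderivative : ∀ x : ℝ, HasDerivAt (fun x => x ^ 2 * u / 2 - x ^ 3 / 6 - x ^ 2 * u ^ 2 / 4)
      (x * u - x ^ 2 / 2 - x * u ^ 2 / 2) x := fun x => by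
    refine ((((hasDerivAt_pow 2 x).mul_const u).div_const 2).fun_sub
      ((hasDerivAt_pow 3 x).div_const 6)).fun_sub
      (((hasDerivAt_pow 2 x).mul_const (u ^ 2)).div_const 4) |>.congr_deriv ?_
    push_cast
    ring
  rw [inner, integral_eq_sub_of_hasDerivAt (fun x _ => antiderivative x)
    (Continuous.intervalIntegrable (by fun_prop) _ _)]
  ring

/-- For 0 ≤ t ≤ u ≤ 1,
6∫₀ᵗ∫₀ᵘ [(1 − max(x,y)) − (1−x)(1−y)] dy dx = 3t²u − t³ − (3/2)t²u². -/
theorem stmt14 (t u : ℝ) (ht : 0 ≤ t) (htu : t ≤ u) (hu : u ≤ 1) :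
    6 * ∫ x in (0:ℝ)..t, ∫ y in (0:ℝ)..u,
        ((1 - max x y) - (1 - x) * (1 - y))
      = 3 * t^2 * u - t^3 - (3 / 2) * t^2 * u^2 :=
  stmt14_general t u ht htu
end
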